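/- arXiv:2310.12043 — 2 statements merged into one kernel-verified Lean document; each statement's English description precedes it below -/
import Mathlib

section
/- Let K ⊆ ℝ² be the attractor of the IFS {φ_1, …, φ_9} where φ_1(x) = x/6 + (−15/8, 15/8), φ_2(x) = x/6 + (−5/2, −5/4), φ_3(x) = (1/6)R_{3π/2}x + (−5/4, −5/4), φ_4(x) = (1/6)R_{π/2}x + (−5/2, −5/2), φ_5(x) = (1/6)R_π x + (−5/4, −5/2), φ_6(x) = x/6 + (5/4, −5/4), φ_7(x) = (1/6)R_{3π/2}x + (5/2, −5/4), φ_8(x) = (1/6)R_{π/2}x + (5/4, −5/2), φ_9(x) = (1/6)R_π x + (5/2, −5/2), and let f(x) = x/6 + (15/8, −15/8). Set E_3 = ⋃_{i=6}^{9} φ_i(K) and A = φ_8(E_3) ∪ φ_9(E_3). Then f(K) equals the topological closure of ⋃_{n=0}^{∞} φ_6^n(A), where φ_6^n is the n-fold composition of φ_6. -/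
open Real

/-- Rotation of `ℝ²` by angle `θ` counterclockwise about the origin. -/
noncomputable def rot2 (θ : ℝ) (p : ℝ × ℝ) : ℝ × ℝ :=
  (Real.cos θ * p.1 - Real.sin θ * p.2, Real.sin θ * p.1 + Real.cos θ * p.2)

/-- The nine similitudes `φ_1, …, φ_9` of Example 2.6 (indexed by `0, …, 8`). -/
noncomputable def exPhi : Fin 9 → ℝ × ℝ → ℝ × ℝ :=
  ![fun p => (1/6 : ℝ) • p + (-(15/8 : ℝ), (15/8 : ℝ)),
    fun p => (1/6 : ℝ) • p + (-(5/2 : ℝ), -(5/4 : ℝ)),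
    fun p => (1/6 : ℝ) • rot2 (3*π/2) p + (-(5/4 : ℝ), -(5/4 : ℝ)),
    fun p => (1/6 : ℝ) • rot2 (π/2) p + (-(5/2 : ℝ), -(5/2 : ℝ)),
    fun p => (1/6 : ℝ) • rot2 π p + (-(5/4 : ℝ), -(5/2 : ℝ)),
    fun p => (1/6 : ℝ) • p + ((5/4 : ℝ), -(5/4 : ℝ)),
    fun p => (1/6 : ℝ) • rot2 (3*π/2) p + ((5/2 : ℝ), -(5/4 : ℝ)),
    fun p => (1/6 : ℝ) • rot2 (π/2) p + ((5/4 : ℝ), -(5/2 : ℝ)),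
    fun p => (1/6 : ℝ) • rot2 π p + ((5/2 : ℝ), -(5/2 : ℝ))]

/-- The similitude `f(x) = x/6 + (15/8, −15/8)` of Example 2.6. -/
noncomputable def exF : ℝ × ℝ → ℝ × ℝ :=
  fun p => (1/6 : ℝ) • p + ((15/8 : ℝ), -(15/8 : ℝ))

/-!
Composing `f` with the nine maps gives `f ∘ φ_1 = φ_6 ∘ f`, while for `i = 2, …, 5`
(resp. `6, …, 9`) the map `f ∘ φ_i` is `φ_8` (resp. `φ_9`) composed with one of
`φ_6, …, φ_9`, each occurring once. Hence `X = f(K)` satisfies `X = φ_6(X) ∪ A`.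
Unwinding this `n` times gives `X ⊆ ⋃ₘ φ_6^m(A) ∪ φ_6^n(X)`, and `φ_6^n(X)` lies within
`6⁻ⁿ diam X` of `φ_6^n(A)`; so `X` is the closure of the `φ_6`-orbit of `A`.
-/

open Set Filter Topology Metric Function
open scoped NNReal

section ContractionOrbit

variable {α : Type*} {g : α → α} {X A : Set α}

theorem iUnion_iterate_image_subset (hX : g '' X ∪ A ⊆ X) : ⋃ n, g^[n] '' A ⊆ X :=
  iUnion_subset fun n => (image_mono (subset_union_right.trans hX)).trans
    ((mapsTo_iff_image_subset.2 (subset_union_left.trans hX)).iterate n).image_subset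

theorem subset_iUnion_iterate_image_union (hX : X ⊆ g '' X ∪ A) :
    ∀ n : ℕ, X ⊆ (⋃ m, g^[m] '' A) ∪ g^[n] '' X
  | 0 => by simp
  | n + 1 => by
    calc X ⊆ (⋃ m, g^[m] '' A) ∪ g^[n] '' X := subset_iUnion_iterate_image_union hX n
      _ ⊆ (⋃ m, g^[m] '' A) ∪ (g^[n + 1] '' X ∪ g^[n] '' A) := by
        rw [iterate_succ, image_comp, ← image_union]
        exact union_subset_union_right _ (image_mono hX)
      _ ⊆ (⋃ m, g^[m] '' A) ∪ g^[n + 1] '' X :=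
        union_subset subset_union_left (union_subset subset_union_right
          ((subset_iUnion (fun m => g^[m] '' A) n).trans subset_union_left))

theorem eq_closure_iUnion_iterate_image [PseudoMetricSpace α] {c : ℝ≥0}
    (hg : LipschitzWith c g) (hc : c < 1) (hXc : IsClosed X) (hXb : Bornology.IsBounded X)
    (hA : A.Nonempty) (hX : X = g '' X ∪ A) : X = closure (⋃ n, g^[n] '' A) := by
  refine Subset.antisymm ?_ (closure_minimal (iUnion_iterate_image_subset hX.ge) hXc)
  intro x hx
  obtain ⟨a, ha⟩ := hA
  have haX : a ∈ X := hX ▸ subset_union_right ha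
  refine Metric.mem_closure_iff.2 fun ε hε => ?_
  have hdecay : Tendsto (fun n : ℕ => (c : ℝ) ^ n * diam X) atTop (𝓝 0) := by
    simpa using (tendsto_pow_atTop_nhds_zero_of_lt_one c.2 hc).mul_const (diam X)
  obtain ⟨n, hn⟩ := (hdecay.eventually (gt_mem_nhds hε)).exists
  rcases subset_iUnion_iterate_image_union hX.le n hx with hxS | ⟨y, hy, rfl⟩
  · exact ⟨_, hxS, by simpa using hε⟩
  · refine ⟨g^[n] a, mem_iUnion.2 ⟨n, mem_image_of_mem _ ha⟩, ?_⟩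
    calc dist (g^[n] y) (g^[n] a) ≤ c ^ n * dist y a := by
          simpa using (hg.iterate n).dist_le_mul y a
      _ ≤ c ^ n * diam X := by gcongr; exact dist_le_diam_of_mem hXb hy haX
      _ < ε := hn

end ContractionOrbit

theorem rot2_pi_div_two (p : ℝ × ℝ) : rot2 (π / 2) p = (-p.2, p.1) := by simp [rot2]

theorem rot2_pi (p : ℝ × ℝ) : rot2 π p = (-p.1, -p.2) := by simp [rot2]

theorem rot2_three_mul_pi_div_two (p : ℝ × ℝ) : rot2 (3 * π / 2) p = (p.2, -p.1) := by
  have h : 3 * π / 2 = π / 2 + π := by ring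
  simp [rot2, h, cos_add, sin_add]

theorem lipschitzWith_exPhi_five : LipschitzWith 6⁻¹ (exPhi 5) := by
  refine LipschitzWith.of_dist_le_mul fun p q => ?_
  simp [exPhi, dist_smul₀]

section Conjugacies

variable (p : ℝ × ℝ)

theorem exF_exPhi_zero : exF (exPhi 0 p) = exPhi 5 (exF p) := by
  ext <;> simp [exF, exPhi, rot2_pi_div_two, rot2_pi, rot2_three_mul_pi_div_two] <;> ring
theorem exF_exPhi_one : exF (exPhi 1 p) = exPhi 7 (exPhi 6 p) := by
  ext <;> simp [exF, exPhi, rot2_pi_div_two, rot2_pi, rot2_three_mul_pi_div_two] <;> ring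
theorem exF_exPhi_two : exF (exPhi 2 p) = exPhi 7 (exPhi 8 p) := by
  ext <;> simp [exF, exPhi, rot2_pi_div_two, rot2_pi, rot2_three_mul_pi_div_two] <;> ring
theorem exF_exPhi_three : exF (exPhi 3 p) = exPhi 7 (exPhi 5 p) := by
  ext <;> simp [exF, exPhi, rot2_pi_div_two, rot2_pi, rot2_three_mul_pi_div_two] <;> ring
theorem exF_exPhi_four : exF (exPhi 4 p) = exPhi 7 (exPhi 7 p) := by
  ext <;> simp [exF, exPhi, rot2_pi_div_two, rot2_pi, rot2_three_mul_pi_div_two] <;> ring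
theorem exF_exPhi_five : exF (exPhi 5 p) = exPhi 8 (exPhi 8 p) := by
  ext <;> simp [exF, exPhi, rot2_pi_div_two, rot2_pi, rot2_three_mul_pi_div_two] <;> ring
theorem exF_exPhi_six : exF (exPhi 6 p) = exPhi 8 (exPhi 7 p) := by
  ext <;> simp [exF, exPhi, rot2_pi_div_two, rot2_pi, rot2_three_mul_pi_div_two] <;> ring
theorem exF_exPhi_seven : exF (exPhi 7 p) = exPhi 8 (exPhi 6 p) := by
  ext <;> simp [exF, exPhi, rot2_pi_div_two, rot2_pi, rot2_three_mul_pi_div_two] <;> ring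
theorem exF_exPhi_eight : exF (exPhi 8 p) = exPhi 8 (exPhi 5 p) := by
  ext <;> simp [exF, exPhi, rot2_pi_div_two, rot2_pi, rot2_three_mul_pi_div_two] <;> ring

end Conjugacies

theorem exF_image_eq_union {K : Set (ℝ × ℝ)} (hK : K = ⋃ i, exPhi i '' K) :
    exF '' K = exPhi 5 '' (exF '' K) ∪
      (exPhi 7 '' (exPhi 5 '' K ∪ exPhi 6 '' K ∪ exPhi 7 '' K ∪ exPhi 8 '' K) ∪
       exPhi 8 '' (exPhi 5 '' K ∪ exPhi 6 '' K ∪ exPhi 7 '' K ∪ exPhi 8 '' K)) := by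
  conv_lhs => rw [hK]
  ext x
  simp only [image_iUnion, image_image, mem_iUnion, image_union, mem_union, mem_image,
    Fin.exists_fin_succ, Fin.reduceSucc, Fin.succ_zero_eq_one, Fin.succ_one_eq_two,
    IsEmpty.exists_iff, exF_exPhi_zero, exF_exPhi_one, exF_exPhi_two, exF_exPhi_three,
    exF_exPhi_four, exF_exPhi_five, exF_exPhi_six, exF_exPhi_seven, exF_exPhi_eight]
  grind

theorem continuous_exF : Continuous exF := by
  unfold exF; fun_prop

/-- **Example 2.6 (Xiao), structure of `f(K)`.** With `E_3 = ⋃_{i=6}^{9} φ_i(K)`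
and `A = φ_8(E_3) ∪ φ_9(E_3)`, one has `f(K) = closure (⋃_{n≥0} φ_6^n(A))`. -/
theorem example_image_eq_closure_union
    (K : Set (ℝ × ℝ)) (hKne : K.Nonempty) (hKcpt : IsCompact K)
    (hK : K = ⋃ i, exPhi i '' K) :
    exF '' K =
      closure (⋃ n : ℕ,
        (exPhi 5)^[n] ''
          (exPhi 7 '' (exPhi 5 '' K ∪ exPhi 6 '' K ∪ exPhi 7 '' K ∪ exPhi 8 '' K) ∪
           exPhi 8 '' (exPhi 5 '' K ∪ exPhi 6 '' K ∪ exPhi 7 '' K ∪ exPhi 8 '' K))) := by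
  have hfK : IsCompact (exF '' K) := hKcpt.image continuous_exF
  exact eq_closure_iUnion_iterate_image lipschitzWith_exPhi_five (by norm_num) hfK.isClosed
    hfK.isBounded (by simp [hKne]) (exF_image_eq_union hK)
end

section
/- Let K ⊆ ℝ² be the attractor of the IFS {φ_1, …, φ_9} where φ_1(x) = x/6 + (−15/8, 15/8), φ_2(x) = x/6 + (−5/2, −5/4), φ_3(x) = (1/6)R_{3π/2}x + (−5/4, −5/4), φ_4(x) = (1/6)R_{π/2}x + (−5/2, −5/2), φ_5(x) = (1/6)R_π x + (−5/4, −5/2), φ_6(x) = x/6 + (5/4, −5/4), φ_7(x) = (1/6)R_{3π/2}x + (5/2, −5/4), φ_8(x) = (1/6)R_{π/2}x + (5/4, −5/2), φ_9(x) = (1/6)R_π x + (5/2, −5/2). Set E_3 = ⋃_{i=6}^{9} φ_i(K) and let ρ be the rotation of ℝ² by π/2 counterclockwise about the point (15/8, −15/8) (the center of the square [3/4, 3] × [−3, −3/4]). Then ρ(E_3) = E_3; consequently, the rotations by π, 3π/2 about (15/8, −15/8) also map E_3 onto itself. -/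
open Real

lemma exPhi5 : exPhi 5 = fun p => (1/6 : ℝ) • p + ((5/4 : ℝ), -(5/4 : ℝ)) := rfl
lemma exPhi6 : exPhi 6 = fun p => (1/6 : ℝ) • rot2 (3*π/2) p + ((5/2 : ℝ), -(5/4 : ℝ)) := rfl
lemma exPhi7 : exPhi 7 = fun p => (1/6 : ℝ) • rot2 (π/2) p + ((5/4 : ℝ), -(5/2 : ℝ)) := rfl
lemma exPhi8 : exPhi 8 = fun p => (1/6 : ℝ) • rot2 π p + ((5/2 : ℝ), -(5/2 : ℝ)) := rfl

lemma sin_3pi2 : Real.sin (3*π/2) = -1 := by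
  have h : (3*π/2) = π + π/2 := by ring
  rw [h, Real.sin_add]; simp

lemma cos_3pi2 : Real.cos (3*π/2) = 0 := by
  have h : (3*π/2) = π + π/2 := by ring
  rw [h, Real.cos_add]; simp

/-- Rotation by `π/2` about `c = (15/8, −15/8)`. -/
noncomputable def rho : ℝ × ℝ → ℝ × ℝ :=
  fun p => rot2 (π/2) (p - ((15/8 : ℝ), -(15/8 : ℝ))) + ((15/8 : ℝ), -(15/8 : ℝ))

lemma r5 : ∀ p, rho (exPhi 5 p) = exPhi 7 p := by
  intro p
  simp only [rho, exPhi5, exPhi7, rot2, Prod.mk.injEq, Prod.smul_def, smul_eq_mul,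
    Real.cos_pi_div_two, Real.sin_pi_div_two, Prod.mk_add_mk, Prod.mk_sub_mk,
    Prod.fst_sub, Prod.snd_sub, Prod.fst_add, Prod.snd_add]
  constructor <;> ring

lemma r6 : ∀ p, rho (exPhi 6 p) = exPhi 5 p := by
  intro p
  simp only [rho, exPhi6, exPhi5, rot2, Prod.mk.injEq, Prod.smul_def, smul_eq_mul,
    Real.cos_pi_div_two, Real.sin_pi_div_two, sin_3pi2, cos_3pi2, Prod.mk_add_mk, Prod.mk_sub_mk,
    Prod.fst_sub, Prod.snd_sub, Prod.fst_add, Prod.snd_add]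
  constructor <;> ring

lemma r7 : ∀ p, rho (exPhi 7 p) = exPhi 8 p := by
  intro p
  simp only [rho, exPhi7, exPhi8, rot2, Prod.mk.injEq, Prod.smul_def, smul_eq_mul,
    Real.cos_pi_div_two, Real.sin_pi_div_two, Real.cos_pi, Real.sin_pi, Prod.mk_add_mk,
    Prod.mk_sub_mk, Prod.fst_sub, Prod.snd_sub, Prod.fst_add, Prod.snd_add]
  constructor <;> ring

lemma r8 : ∀ p, rho (exPhi 8 p) = exPhi 6 p := by
  intro p
  simp only [rho, exPhi8, exPhi6, rot2, Prod.mk.injEq, Prod.smul_def, smul_eq_mul,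
    Real.cos_pi_div_two, Real.sin_pi_div_two, Real.cos_pi, Real.sin_pi, sin_3pi2, cos_3pi2,
    Prod.mk_add_mk, Prod.mk_sub_mk, Prod.fst_sub, Prod.snd_sub, Prod.fst_add, Prod.snd_add]
  constructor <;> ring

set_option maxHeartbeats 1000000 in
lemma rho_E3 (K : Set (ℝ × ℝ)) :
    rho '' (exPhi 5 '' K ∪ exPhi 6 '' K ∪ exPhi 7 '' K ∪ exPhi 8 '' K) =
      exPhi 5 '' K ∪ exPhi 6 '' K ∪ exPhi 7 '' K ∪ exPhi 8 '' K := by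
  rw [Set.image_union, Set.image_union, Set.image_union,
    Set.image_image, Set.image_image, Set.image_image, Set.image_image]
  simp only [r5, r6, r7, r8]
  ext x
  simp only [Set.mem_union]
  tauto

lemma rho_pi : (fun p => rot2 π (p - ((15/8 : ℝ), -(15/8 : ℝ))) + ((15/8 : ℝ), -(15/8 : ℝ)))
    = rho ∘ rho := by
  funext p
  simp only [rho, Function.comp, rot2, Real.cos_pi_div_two, Real.sin_pi_div_two,
    Real.cos_pi, Real.sin_pi, Prod.mk.injEq, Prod.mk_add_mk, Prod.mk_sub_mk,
    Prod.fst_sub, Prod.snd_sub, Prod.fst_add, Prod.snd_add]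
  constructor <;> ring

lemma rho_3pi2 : (fun p => rot2 (3*π/2) (p - ((15/8 : ℝ), -(15/8 : ℝ))) + ((15/8 : ℝ), -(15/8 : ℝ)))
    = rho ∘ rho ∘ rho := by
  funext p
  simp only [rho, Function.comp, rot2, Real.cos_pi_div_two, Real.sin_pi_div_two,
    sin_3pi2, cos_3pi2, Prod.mk.injEq, Prod.mk_add_mk, Prod.mk_sub_mk,
    Prod.fst_sub, Prod.snd_sub, Prod.fst_add, Prod.snd_add]
  constructor <;> ring

/-- **Example 2.6 (Xiao), rotational symmetry of `E_3`.** Let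
`E_3 = ⋃_{i=6}^{9} φ_i(K)` and let `ρ_θ` be the rotation by `θ` about the point
`c = (15/8, −15/8)` (the center of `[3/4,3] × [−3,−3/4]`). Then the rotations by
`π/2`, `π` and `3π/2` about `c` all map `E_3` onto itself. -/
theorem example_E3_rotation_invariant
    (K : Set (ℝ × ℝ)) (hKne : K.Nonempty) (hKcpt : IsCompact K)
    (hK : K = ⋃ i, exPhi i '' K) :
    (fun p => rot2 (π/2) (p - ((15/8 : ℝ), -(15/8 : ℝ))) + ((15/8 : ℝ), -(15/8 : ℝ))) ''
        (exPhi 5 '' K ∪ exPhi 6 '' K ∪ exPhi 7 '' K ∪ exPhi 8 '' K) =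
      exPhi 5 '' K ∪ exPhi 6 '' K ∪ exPhi 7 '' K ∪ exPhi 8 '' K ∧
    (fun p => rot2 π (p - ((15/8 : ℝ), -(15/8 : ℝ))) + ((15/8 : ℝ), -(15/8 : ℝ))) ''
        (exPhi 5 '' K ∪ exPhi 6 '' K ∪ exPhi 7 '' K ∪ exPhi 8 '' K) =
      exPhi 5 '' K ∪ exPhi 6 '' K ∪ exPhi 7 '' K ∪ exPhi 8 '' K ∧
    (fun p => rot2 (3*π/2) (p - ((15/8 : ℝ), -(15/8 : ℝ))) + ((15/8 : ℝ), -(15/8 : ℝ))) ''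
        (exPhi 5 '' K ∪ exPhi 6 '' K ∪ exPhi 7 '' K ∪ exPhi 8 '' K) =
      exPhi 5 '' K ∪ exPhi 6 '' K ∪ exPhi 7 '' K ∪ exPhi 8 '' K := by
  have h1 := rho_E3 K
  refine ⟨h1, ?_, ?_⟩
  · rw [rho_pi, Set.image_comp, h1, h1]
  · rw [rho_3pi2, Set.image_comp, Set.image_comp, h1, h1, h1]
end
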